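/- arXiv:1412.0347 — 4 statements merged into one kernel-verified Lean document; each statement's English description precedes it below -/
import Mathlib

section
/- Let Ω ⊆ ℝ^m be a nonempty bounded open set, let a < b be real numbers, and let Y ⊆ ℝ^n be a nonempty compact convex set. Suppose u : closure(Ω) × [a,b] → ℝ^n is continuous, is smooth on Ω × (a,b), and satisfies the heat equation ∂u/∂t = Δu on Ω × (a,b) (the Laplacian taken componentwise in the spatial variable). If u(x,a) ∈ Y for all x ∈ closure(Ω) and u(x,t) ∈ Y for all x ∈ frontier(Ω) and t ∈ [a,b], then u(x,t) ∈ Y for all (x,t) ∈ closure(Ω) × [a,b]. -/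
open Metric Set

/-- The Laplacian of a map between inner product spaces: the trace of the second
derivative, computed as a sum of second directional derivatives over an orthonormal basis. -/
noncomputable def laplacian {E F : Type*} [NormedAddCommGroup E] [InnerProductSpace ℝ E]
    [FiniteDimensional ℝ E] [NormedAddCommGroup F] [NormedSpace ℝ F] (f : E → F) (x : E) : F :=
  ∑ i, iteratedFDeriv ℝ 2 f x ![stdOrthonormalBasis ℝ E i, stdOrthonormalBasis ℝ E i]

open Filter Topology

lemma aux_deriv_nonneg_of_max_left {f : ℝ → ℝ} {d a t : ℝ} (hat : a < t)
    (hf : HasDerivAt f d t) (hmax : ∀ s ∈ Set.Icc a t, f s ≤ f t) : 0 ≤ d := by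
  have h1 : Tendsto (slope f t) (𝓝[<] t) (𝓝 d) :=
    (hasDerivAt_iff_tendsto_slope.1 hf).mono_left (nhdsWithin_mono _ fun s hs => ne_of_lt hs)
  refine ge_of_tendsto h1 ?_
  filter_upwards [Ioo_mem_nhdsLT_of_mem (⟨hat, le_rfl⟩ : t ∈ Set.Ioc a t)] with s hs
  rw [slope_def_field]
  exact div_nonneg_iff.2 <| Or.inr ⟨by linarith [hmax s ⟨hs.1.le, hs.2.le⟩], by linarith [hs.2]⟩

/-- Second derivative test: 1-D version at 0. -/
lemma aux_second_deriv_nonpos {g g' : ℝ → ℝ} {c : ℝ}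
    (hd : ∀ᶠ s in 𝓝 (0:ℝ), HasDerivAt g (g' s) s)
    (hd' : HasDerivAt g' c 0) (hmax : IsLocalMax g 0) : c ≤ 0 := by
  by_contra hc
  push_neg at hc
  have hg'0 : g' 0 = 0 := hmax.hasDerivAt_eq_zero hd.self_of_nhds
  have hslope : Tendsto (slope g' 0) (𝓝[>] 0) (𝓝 c) :=
    (hasDerivAt_iff_tendsto_slope.1 hd').mono_left
      (nhdsWithin_mono _ fun s hs => ne_of_gt hs)
  have hev : ∀ᶠ s in 𝓝[>] (0:ℝ), 0 < g' s := by
    filter_upwards [hslope.eventually (eventually_gt_nhds (half_lt_self hc)),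
      self_mem_nhdsWithin] with s hs hs0
    rw [slope_def_field, hg'0, sub_zero, sub_zero] at hs
    calc (0:ℝ) < c / 2 * s := mul_pos (half_pos hc) hs0
      _ < g' s := (lt_div_iff₀ hs0).1 hs
  have hall : ∀ᶠ s in 𝓝[>] (0:ℝ),
      ((HasDerivAt g (g' s) s ∧ g s ≤ g 0) ∧ 0 < g' s) :=
    (((hd.and hmax).filter_mono nhdsWithin_le_nhds).and hev)
  obtain ⟨δ, hδ, hsub⟩ := mem_nhdsGT_iff_exists_Ioc_subset.1 hall
  have hδ0 : 0 < δ := hδ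
  have hmono : StrictMonoOn g (Set.Icc 0 δ) := by
    apply strictMonoOn_of_deriv_pos (convex_Icc 0 δ)
    · intro s hs
      rcases eq_or_lt_of_le hs.1 with h | h
      · rw [← h]
        exact hd.self_of_nhds.continuousAt.continuousWithinAt
      · exact ((hsub ⟨h, hs.2⟩).1.1).continuousAt.continuousWithinAt
    · intro s hs
      rw [interior_Icc] at hs
      rw [(hsub ⟨hs.1, hs.2.le⟩).1.1.deriv]
      exact (hsub ⟨hs.1, hs.2.le⟩).2
  have h1 : g 0 < g δ := hmono (Set.left_mem_Icc.2 hδ0.le) ⟨hδ0.le, le_rfl⟩ hδ0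
  exact absurd (hsub ⟨hδ0, le_rfl⟩).1.2 (not_le.2 h1)

variable {E F G : Type*} [NormedAddCommGroup E] [NormedSpace ℝ E]
  [NormedAddCommGroup F] [NormedSpace ℝ F] [NormedAddCommGroup G] [NormedSpace ℝ G]

lemma aux_dir_second_deriv_nonpos {f : E → ℝ} {s : Set E} (hs : IsOpen s) {x : E}
    (hx : x ∈ s) (hf : ContDiffOn ℝ (⊤ : ℕ∞) f s) (hmax : IsLocalMax f x) (e : E) :
    iteratedFDeriv ℝ 2 f x ![e, e] ≤ 0 := by
  set L : ℝ → E := fun σ => x + σ • e with hLdef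
  have hL : ∀ σ : ℝ, HasDerivAt L e σ := by
    intro σ
    have := (((hasDerivAt_id σ).smul_const e).const_add x)
    rwa [one_smul] at this
  have hLcont : Continuous L := by continuity
  have hL0 : L 0 = x := by simp [hLdef]
  have hLt : Tendsto L (𝓝 0) (𝓝 x) := by
    have h := hLcont.continuousAt (x := (0:ℝ)); rw [ContinuousAt, hL0] at h; exact h
  have hmem : ∀ᶠ σ in 𝓝 (0:ℝ), L σ ∈ s := hLt.eventually (hs.eventually_mem hx)
  set g' : ℝ → ℝ := fun σ => fderiv ℝ f (L σ) e with hg'def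
  have hd : ∀ᶠ σ in 𝓝 (0:ℝ), HasDerivAt (f ∘ L) (g' σ) σ := by
    filter_upwards [hmem] with σ hσ
    exact (((hf.contDiffAt (hs.mem_nhds hσ)).differentiableAt (by simp)).hasFDerivAt).comp_hasDerivAt
      σ (hL σ)
  have h3 : HasFDerivAt (fderiv ℝ f) (fderiv ℝ (fderiv ℝ f) x) x :=
    (((hf.contDiffAt (hs.mem_nhds hx)).fderiv_right (m := 1) (WithTop.coe_le_coe.2 le_top)).differentiableAt one_ne_zero).hasFDerivAt
  have h3' : HasFDerivAt (fderiv ℝ f) (fderiv ℝ (fderiv ℝ f) x) (L 0) := by rwa [hL0]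
  have h4 : HasDerivAt (fun σ => fderiv ℝ f (L σ)) (fderiv ℝ (fderiv ℝ f) x e) 0 :=
    h3'.comp_hasDerivAt 0 (hL 0)
  have hd' : HasDerivAt g' (fderiv ℝ (fderiv ℝ f) x e e) 0 :=
    ((ContinuousLinearMap.apply ℝ ℝ e).hasFDerivAt).comp_hasDerivAt 0 h4
  have hmax' : IsLocalMax (f ∘ L) 0 := by
    have hm : IsMaxFilter f (𝓝 x) (L 0) := by rwa [hL0]
    exact hm.comp_tendsto hLt
  have := aux_second_deriv_nonpos hd hd' hmax'
  rwa [iteratedFDeriv_two_apply]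
  -- goal may need simp on ![e,e] 0 / 1

lemma aux_laplacian_nonpos {E : Type*} [NormedAddCommGroup E] [InnerProductSpace ℝ E]
    [FiniteDimensional ℝ E] {f : E → ℝ} {s : Set E} (hs : IsOpen s) {x : E}
    (hx : x ∈ s) (hf : ContDiffOn ℝ (⊤ : ℕ∞) f s) (hmax : IsLocalMax f x) :
    laplacian f x ≤ 0 := by
  apply Finset.sum_nonpos
  intro i _
  exact aux_dir_second_deriv_nonpos hs hx hf hmax _

lemma aux_laplacian_comp {E F G : Type*} [NormedAddCommGroup E] [InnerProductSpace ℝ E]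
    [FiniteDimensional ℝ E] [NormedAddCommGroup F] [NormedSpace ℝ F]
    [NormedAddCommGroup G] [NormedSpace ℝ G]
    (g : F →L[ℝ] G) {f : E → F} {s : Set E} (hs : IsOpen s) {x : E}
    (hx : x ∈ s) (hf : ContDiffOn ℝ (⊤ : ℕ∞) f s) :
    laplacian (fun y => g (f y)) x = g (laplacian f x) := by
  unfold laplacian
  rw [map_sum]
  refine Finset.sum_congr rfl fun i _ => ?_
  have h1 : iteratedFDeriv ℝ 2 (⇑g ∘ f) x
      = g.compContinuousMultilinearMap (iteratedFDeriv ℝ 2 f x) := by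
    rw [← iteratedFDerivWithin_of_isOpen 2 hs hx, ← iteratedFDerivWithin_of_isOpen 2 hs hx,
      g.iteratedFDerivWithin_comp_left (hf x hx) hs.uniqueDiffOn hx (WithTop.coe_le_coe.2 le_top)]
  have h2 : (fun y => g (f y)) = ⇑g ∘ f := rfl
  rw [h2, h1]
  rfl

lemma aux_max_principle {m : ℕ} (Ω : Set (EuclideanSpace ℝ (Fin m))) (hΩne : Ω.Nonempty)
    (hΩopen : IsOpen Ω) (hΩbdd : Bornology.IsBounded Ω)
    (a b : ℝ) (hab : a < b) (v : EuclideanSpace ℝ (Fin m) × ℝ → ℝ)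
    (hv_cont : ContinuousOn v (closure Ω ×ˢ Icc a b))
    (hv_smooth : ContDiffOn ℝ (⊤ : ℕ∞) v (Ω ×ˢ Ioo a b))
    (hv_heat : ∀ x ∈ Ω, ∀ t ∈ Ioo a b,
      deriv (fun s => v (x, s)) t = laplacian (fun y => v (y, t)) x)
    (c : ℝ) (h_init : ∀ x ∈ closure Ω, v (x, a) ≤ c)
    (h_bdry : ∀ x ∈ frontier Ω, ∀ t ∈ Icc a b, v (x, t) ≤ c) :
    ∀ x ∈ closure Ω, ∀ t ∈ Icc a b, v (x, t) ≤ c := by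
  have hopen : IsOpen (Ω ×ˢ Ioo a b) := hΩopen.prod isOpen_Ioo
  -- differentiability of time slices
  have hslice : ∀ x ∈ Ω, ∀ t ∈ Ioo a b,
      HasDerivAt (fun s => v (x, s)) (deriv (fun s => v (x, s)) t) t := by
    intro x hx t ht
    have hca := hv_smooth.contDiffAt (hopen.mem_nhds (Set.mk_mem_prod hx ht))
    have hdv := (hca.differentiableAt (by simp)).hasFDerivAt
    have hline : HasDerivAt (fun s : ℝ => ((x, s) : EuclideanSpace ℝ (Fin m) × ℝ))
        ((0 : EuclideanSpace ℝ (Fin m)), (1 : ℝ)) t :=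
      (hasDerivAt_const t x).prodMk (hasDerivAt_id t)
    have h := hdv.comp_hasDerivAt t hline
    exact h.differentiableAt.hasDerivAt
  -- the key perturbed estimate
  have key : ∀ b' ∈ Ioo a b, ∀ ε : ℝ, 0 < ε → ∀ x ∈ closure Ω, ∀ t ∈ Icc a b',
      v (x, t) - ε * (t - a) ≤ c := by
    intro b' hb' ε hε
    set w : EuclideanSpace ℝ (Fin m) × ℝ → ℝ := fun p => v p - ε * (p.2 - a) with hw
    have hK'sub : closure Ω ×ˢ Icc a b' ⊆ closure Ω ×ˢ Icc a b :=
      prod_mono_right (Icc_subset_Icc le_rfl hb'.2.le)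
    have hK'cpt : IsCompact (closure Ω ×ˢ Icc a b') :=
      hΩbdd.isCompact_closure.prod isCompact_Icc
    have hK'ne : (closure Ω ×ˢ Icc a b').Nonempty :=
      ⟨(hΩne.choose, a), ⟨subset_closure hΩne.choose_spec, left_mem_Icc.2 hb'.1.le⟩⟩
    have hwcont : ContinuousOn w (closure Ω ×ˢ Icc a b') :=
      (hv_cont.mono hK'sub).sub (Continuous.continuousOn (by fun_prop))
    obtain ⟨⟨x₁, t₁⟩, hp₁, hmax⟩ := hK'cpt.exists_isMaxOn hK'ne hwcont
    rw [mem_prod] at hp₁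
    obtain ⟨hx₁, ht₁⟩ := hp₁
    suffices hwc : w (x₁, t₁) ≤ c by
      intro x hx t ht
      exact le_trans (hmax (Set.mk_mem_prod hx ht)) hwc
    by_cases hfr : x₁ ∈ frontier Ω
    · have h1 := h_bdry x₁ hfr t₁ ⟨ht₁.1, le_trans ht₁.2 hb'.2.le⟩
      have h2 : 0 ≤ ε * (t₁ - a) := mul_nonneg hε.le (by linarith [ht₁.1])
      show v (x₁, t₁) - ε * (t₁ - a) ≤ c
      linarith
    · have hx₁Ω : x₁ ∈ Ω := by
        by_contra hxn
        exact hfr (by rw [hΩopen.frontier_eq]; exact ⟨hx₁, hxn⟩)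
      by_cases hta : t₁ = a
      · have h1 := h_init x₁ hx₁
        show v (x₁, t₁) - ε * (t₁ - a) ≤ c
        rw [hta]
        simp only [sub_self, mul_zero, sub_zero]
        linarith
      · have ht₁' : t₁ ∈ Ioc a b' := ⟨lt_of_le_of_ne ht₁.1 (Ne.symm hta), ht₁.2⟩
        have ht₁ab : t₁ ∈ Ioo a b := ⟨ht₁'.1, lt_of_le_of_lt ht₁'.2 hb'.2⟩
        exfalso
        have hds := hslice x₁ hx₁Ω t₁ ht₁ab
        have hwt : HasDerivAt (fun s => v (x₁, s) - ε * (s - a))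
            (deriv (fun s => v (x₁, s)) t₁ - ε) t₁ := by
          have h2 : HasDerivAt (fun s : ℝ => ε * (s - a)) ε t₁ := by
            simpa using ((hasDerivAt_id t₁).sub_const a).const_mul ε
          exact hds.sub h2
        have hmaxt : ∀ s ∈ Icc a t₁, v (x₁, s) - ε * (s - a) ≤ v (x₁, t₁) - ε * (t₁ - a) :=
          fun s hs => hmax (Set.mk_mem_prod hx₁ ⟨hs.1, le_trans hs.2 ht₁.2⟩)
        have hDε := aux_deriv_nonneg_of_max_left ht₁'.1 hwt hmaxt
        have hφ : ContDiffOn ℝ (⊤ : ℕ∞) (fun y => v (y, t₁)) Ω := by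
          have hι : ContDiff ℝ (⊤ : ℕ∞) (fun y : EuclideanSpace ℝ (Fin m) => (y, t₁)) :=
            contDiff_id.prodMk contDiff_const
          exact hv_smooth.comp hι.contDiffOn (fun y hy => ⟨hy, ht₁ab⟩)
        have hlocmax : IsLocalMax (fun y => v (y, t₁)) x₁ := by
          filter_upwards [hΩopen.mem_nhds hx₁Ω] with y hy
          have h1 : v (y, t₁) - ε * (t₁ - a) ≤ v (x₁, t₁) - ε * (t₁ - a) :=
            hmax (Set.mk_mem_prod (subset_closure hy) ht₁)
          show v (y, t₁) ≤ v (x₁, t₁)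
          linarith
        have hlap := aux_laplacian_nonpos hΩopen hx₁Ω hφ hlocmax
        rw [hv_heat x₁ hx₁Ω t₁ ht₁ab] at hDε
        linarith
  intro x hx
  have claim2 : ∀ t ∈ Ico a b, v (x, t) ≤ c := by
    intro t ht
    refine le_of_forall_pos_le_add fun δ hδ => ?_
    have hb'' : (t + b) / 2 ∈ Ioo a b := ⟨by linarith [ht.1, ht.2], by linarith [ht.2]⟩
    have ht'' : t ∈ Icc a ((t + b) / 2) := ⟨ht.1, by linarith [ht.2]⟩
    have hεpos : 0 < δ / (b - a) := div_pos hδ (by linarith)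
    have h1 := key _ hb'' _ hεpos x hx t ht''
    have h2 : δ / (b - a) * (t - a) ≤ δ := by
      rw [div_mul_eq_mul_div, div_le_iff₀ (by linarith : (0:ℝ) < b - a)]
      have := ht.1; nlinarith [ht.2]
    linarith
  intro t ht
  rcases eq_or_lt_of_le ht.2 with hb | hb
  · subst hb
    have hcont : ContinuousOn (fun s => v (x, s)) (Icc a t) := by
      have hι : Continuous (fun s : ℝ => ((x, s) : EuclideanSpace ℝ (Fin m) × ℝ)) := by fun_prop
      exact hv_cont.comp hι.continuousOn (fun s hs => ⟨hx, hs⟩)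
    have hlim : Tendsto (fun s => v (x, s)) (𝓝[Ico a t] t) (𝓝 (v (x, t))) :=
      ((hcont t (right_mem_Icc.2 hab.le)).mono Ico_subset_Icc_self).tendsto
    have hne : (𝓝[Ico a t] t).NeBot := by
      refine mem_closure_iff_nhdsWithin_neBot.1 ?_
      rw [closure_Ico hab.ne]
      exact right_mem_Icc.2 hab.le
    exact le_of_tendsto hlim (eventually_mem_nhdsWithin.mono fun s hs => claim2 s hs)
  · exact claim2 t ⟨ht.1, hb⟩

/-- A solution of the heat equation on a bounded domain cannot leave a compact convex set
before the image of the parabolic boundary does. -/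
theorem heat_flow_stays_in_compact_convex_set
    {m n : ℕ} (Ω : Set (EuclideanSpace ℝ (Fin m))) (hΩne : Ω.Nonempty) (hΩopen : IsOpen Ω)
    (hΩbdd : Bornology.IsBounded Ω)
    (a b : ℝ) (hab : a < b)
    (Y : Set (EuclideanSpace ℝ (Fin n))) (hYne : Y.Nonempty) (hYcpt : IsCompact Y)
    (hYconv : Convex ℝ Y)
    (u : EuclideanSpace ℝ (Fin m) × ℝ → EuclideanSpace ℝ (Fin n))
    (hu_cont : ContinuousOn u (closure Ω ×ˢ Icc a b))
    (hu_smooth : ContDiffOn ℝ (⊤ : ℕ∞) u (Ω ×ˢ Ioo a b))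
    (hu_heat : ∀ x ∈ Ω, ∀ t ∈ Ioo a b,
      deriv (fun s => u (x, s)) t = laplacian (fun y => u (y, t)) x)
    (h_init : ∀ x ∈ closure Ω, u (x, a) ∈ Y)
    (h_bdry : ∀ x ∈ frontier Ω, ∀ t ∈ Icc a b, u (x, t) ∈ Y) :
    ∀ x ∈ closure Ω, ∀ t ∈ Icc a b, u (x, t) ∈ Y := by
  intro x hx t ht
  by_contra hY
  obtain ⟨f, c, hfy, hfc⟩ := geometric_hahn_banach_closed_point hYconv hYcpt.isClosed hY
  have hopen : IsOpen (Ω ×ˢ Ioo a b) := hΩopen.prod isOpen_Ioo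
  have hv_cont : ContinuousOn (fun p => f (u p)) (closure Ω ×ˢ Icc a b) :=
    f.continuous.comp_continuousOn hu_cont
  have hv_smooth : ContDiffOn ℝ (⊤ : ℕ∞) (fun p => f (u p)) (Ω ×ˢ Ioo a b) :=
    ContDiffOn.continuousLinearMap_comp f hu_smooth
  have hv_heat : ∀ x ∈ Ω, ∀ t ∈ Ioo a b,
      deriv (fun s => f (u (x, s))) t = laplacian (fun y => f (u (y, t))) x := by
    intro x hx t ht
    have hca := hu_smooth.contDiffAt (hopen.mem_nhds (Set.mk_mem_prod hx ht))
    have hline : HasDerivAt (fun s : ℝ => ((x, s) : EuclideanSpace ℝ (Fin m) × ℝ))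
        ((0 : EuclideanSpace ℝ (Fin m)), (1 : ℝ)) t :=
      (hasDerivAt_const t x).prodMk (hasDerivAt_id t)
    have hdu : HasDerivAt (fun s => u (x, s)) ((fderiv ℝ u (x, t)) (0, 1)) t :=
      ((hca.differentiableAt (by simp)).hasFDerivAt).comp_hasDerivAt t hline
    have hd1 : HasDerivAt (fun s => f (u (x, s))) (f ((fderiv ℝ u (x, t)) (0, 1))) t :=
      (f.hasFDerivAt).comp_hasDerivAt t hdu
    have hφ : ContDiffOn ℝ (⊤ : ℕ∞) (fun y => u (y, t)) Ω := by
      have hι : ContDiff ℝ (⊤ : ℕ∞) (fun y : EuclideanSpace ℝ (Fin m) => (y, t)) :=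
        contDiff_id.prodMk contDiff_const
      exact hu_smooth.comp hι.contDiffOn (fun y hy => Set.mk_mem_prod hy ht)
    rw [hd1.deriv, aux_laplacian_comp f hΩopen hx hφ, ← hu_heat x hx t ht, hdu.deriv]
  have h_init' : ∀ y ∈ closure Ω, f (u (y, a)) ≤ c := fun y hy => (hfy _ (h_init y hy)).le
  have h_bdry' : ∀ y ∈ frontier Ω, ∀ s ∈ Icc a b, f (u (y, s)) ≤ c :=
    fun y hy s hs => (hfy _ (h_bdry y hy s hs)).le
  have hvc := aux_max_principle Ω hΩne hΩopen hΩbdd a b hab (fun p => f (u p)) hv_cont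
    hv_smooth hv_heat c h_init' h_bdry' x hx t ht
  exact absurd hvc (not_le.2 hfc)
end

section
/- Let Ω ⊆ ℝ^m be a nonempty bounded open set, let a < b be real numbers, and let f : closure(Ω) × [a,b] → ℝ be continuous with f ≤ 0 on closure(Ω) × {a} and f ≤ 0 on frontier(Ω) × [a,b]. Suppose there exists C ∈ ℝ such that at every point (x₀,t₀) ∈ Ω × (a,b) where f(x₀,t₀) > 0, f satisfies ∂f/∂t − Δf − C·f ≤ 0 in the viscosity sense. Then f ≤ 0 on all of closure(Ω) × [a,b]. -/
open Metric Set

/-!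
Divide `f` by `exp ((C + 1) t)` and subtract the penalty `ε / (b - t)`, which blows up at the
final time. If `f` were positive somewhere in `closure Ω × [a, b)`, then for small `ε` the
penalized function attains a positive maximum `M`, at a point of `Ω × (a, b)` by the boundary
conditions. There the function `t ↦ exp ((C + 1) t) (M + ε / (b - t))`, constant in space,
touches `f` from above, and its time derivative exceeds `C` times its value, contradicting the
viscosity inequality. The final time `t = b` follows by continuity.
-/

open Filter Topology Real

theorem laplacian_const {E F : Type*} [NormedAddCommGroup E] [InnerProductSpace ℝ E]
    [FiniteDimensional ℝ E] [NormedAddCommGroup F] [NormedSpace ℝ F] (c : F) (x : E) :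
    laplacian (fun _ => c) x = 0 := by
  simp [laplacian, iteratedFDeriv_const_of_ne two_ne_zero]

theorem hasDerivAt_exp_mul_mul_add_div_sub {l M ε b t : ℝ} (ht : t ≠ b) :
    HasDerivAt (fun s => exp (l * s) * (M + ε / (b - s)))
      (l * (exp (l * t) * (M + ε / (b - t))) + exp (l * t) * (ε / (b - t) ^ 2)) t := by
  have hbt : b - t ≠ 0 := sub_ne_zero.mpr ht.symm
  have hexp : HasDerivAt (fun s => exp (l * s)) (exp (l * t) * l) t := by
    simpa using ((hasDerivAt_id t).const_mul l).exp
  have hpen : HasDerivAt (fun s => M + ε / (b - s)) (ε / (b - t) ^ 2) t := by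
    simpa [div_eq_mul_inv] using
      ((((hasDerivAt_id t).const_sub b).inv hbt).const_mul ε).const_add M
  exact (hexp.mul hpen).congr_deriv (by ring)

theorem contDiffOn_exp_mul_mul_add_div_sub (l M ε b : ℝ) :
    ContDiffOn ℝ 2 (fun s => exp (l * s) * (M + ε / (b - s))) {b}ᶜ := by
  refine (contDiff_exp.comp (contDiff_const.mul contDiff_id)).contDiffOn.mul
    (contDiffOn_const.add (contDiffOn_const.div (contDiff_const.sub contDiff_id).contDiffOn ?_))
  intro t ht
  exact sub_ne_zero.mpr (Ne.symm ht)

theorem exists_isMaxOn_sub_div_sub {X : Type*} [TopologicalSpace X] {K : Set X}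
    (hK : IsCompact K) {a b ε : ℝ} (hε : 0 < ε) {g : X × ℝ → ℝ}
    (hg : ContinuousOn g (K ×ˢ Icc a b)) {p₁ : X × ℝ} (hp₁ : p₁ ∈ K ×ˢ Ico a b) :
    ∃ p₀ ∈ K ×ˢ Ico a b, IsMaxOn (fun p => g p - ε / (b - p.2)) (K ×ˢ Ico a b) p₀ := by
  set h := fun p : X × ℝ => g p - ε / (b - p.2)
  obtain ⟨S, hS⟩ := (hK.prod isCompact_Icc).bddAbove_image hg
  have hgS : ∀ p ∈ K ×ˢ Ico a b, g p ≤ S := fun p hp =>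
    hS (mem_image_of_mem g ⟨hp.1, Ico_subset_Icc_self hp.2⟩)
  have hp₁S : h p₁ < S := by
    have := div_pos hε (sub_pos.mpr hp₁.2.2)
    linarith [hgS p₁ hp₁]
  set b' := max p₁.2 (b - ε / (S - h p₁))
  have hb'b : b' < b := max_lt hp₁.2.2 (sub_lt_self _ (div_pos hε (sub_pos.mpr hp₁S)))
  have hsub : K ×ˢ Icc a b' ⊆ K ×ˢ Ico a b := prod_mono_right (Icc_subset_Ico_right hb'b)
  have hcont : ContinuousOn h (K ×ˢ Icc a b') :=
    (hg.mono (hsub.trans (prod_mono_right Ico_subset_Icc_self))).sub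
      (continuousOn_const.div (by fun_prop) fun p hp => (sub_pos.mpr (hsub hp).2.2).ne')
  have hp₁' : p₁ ∈ K ×ˢ Icc a b' := ⟨hp₁.1, hp₁.2.1, le_max_left _ _⟩
  obtain ⟨p₀, hp₀, hmax⟩ := (hK.prod isCompact_Icc).exists_isMaxOn ⟨p₁, hp₁'⟩ hcont
  refine ⟨p₀, hsub hp₀, fun p hp => ?_⟩
  rcases le_or_gt p.2 b' with hpb' | hpb'
  · exact hmax ⟨hp.1, hp.2.1, hpb'⟩
  have hpen : S - h p₁ < ε / (b - p.2) := by
    have : b - p.2 < ε / (S - h p₁) := by linarith [le_max_right p₁.2 (b - ε / (S - h p₁))]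
    rwa [lt_div_iff₀ (sub_pos.mpr hp₁S), mul_comm, ← lt_div_iff₀ (sub_pos.mpr hp.2.2)] at this
  have : h p < h p₁ := by
    show g p - _ < _
    linarith [hgS p hp]
  exact this.le.trans (hmax hp₁')

section Viscosity

variable {E : Type*} [NormedAddCommGroup E] [InnerProductSpace ℝ E] [FiniteDimensional ℝ E]

/-- `f` is a viscosity subsolution of `∂ₜu - Δu - C u = 0` at `p₀`, tested against functions
touching it from above on neighbourhoods of `p₀` contained in `V`. -/
def IsViscositySubsolutionAt (C : ℝ) (f : E × ℝ → ℝ) (V : Set (E × ℝ)) (p₀ : E × ℝ) : Prop :=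
  ∀ (φ : E × ℝ → ℝ) (U : Set (E × ℝ)), U ∈ 𝓝 p₀ → U ⊆ V → ContDiffOn ℝ 2 φ U →
    φ p₀ = f p₀ → (∀ p ∈ U, f p ≤ φ p) →
    deriv (fun s => φ (p₀.1, s)) p₀.2 - laplacian (fun y => φ (y, p₀.2)) p₀.1 - C * φ p₀ ≤ 0

variable {C : ℝ} {f : E × ℝ → ℝ} {V : Set (E × ℝ)} {x₀ : E} {t₀ : ℝ}

theorem IsViscositySubsolutionAt.deriv_le (hf : IsViscositySubsolutionAt C f V (x₀, t₀))
    {ψ : ℝ → ℝ} {U : Set (E × ℝ)} {I : Set ℝ} (hU : U ∈ 𝓝 (x₀, t₀)) (hUV : U ⊆ V)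
    (hUI : MapsTo Prod.snd U I) (hψ : ContDiffOn ℝ 2 ψ I) (hψ₀ : ψ t₀ = f (x₀, t₀))
    (hfψ : ∀ p ∈ U, f p ≤ ψ p.2) :
    deriv ψ t₀ ≤ C * ψ t₀ := by
  have := hf (fun p => ψ p.2) U hU hUV (hψ.comp contDiff_snd.contDiffOn hUI) hψ₀ hfψ
  dsimp only at this
  rw [laplacian_const] at this
  linarith

theorem IsViscositySubsolutionAt.false_of_isMaxOn (hf : IsViscositySubsolutionAt C f V (x₀, t₀))
    (hV : V ∈ 𝓝 (x₀, t₀)) {l ε b : ℝ} (hl : C < l) (hε : 0 ≤ ε) (hVb : ∀ p ∈ V, p.2 < b)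
    (hmax : IsMaxOn (fun p => f p / exp (l * p.2) - ε / (b - p.2)) V (x₀, t₀))
    (hpos : 0 < f (x₀, t₀)) : False := by
  set M := f (x₀, t₀) / exp (l * t₀) - ε / (b - t₀)
  set ψ := fun s => exp (l * s) * (M + ε / (b - s))
  have ht₀ : t₀ ≠ b := (hVb _ (mem_of_mem_nhds hV)).ne
  have hψ₀ : ψ t₀ = f (x₀, t₀) := by
    simp only [ψ, M, sub_add_cancel]
    field_simp
  have hfψ : ∀ p ∈ V, f p ≤ ψ p.2 := fun p hp => by
    rw [← div_le_iff₀' (exp_pos _), ← sub_le_iff_le_add]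
    exact hmax hp
  have hderiv := hf.deriv_le hV subset_rfl (fun p hp => (hVb p hp).ne)
    (contDiffOn_exp_mul_mul_add_div_sub l M ε b) hψ₀ hfψ
  rw [(hasDerivAt_exp_mul_mul_add_div_sub ht₀).deriv] at hderiv
  have hpen : 0 ≤ exp (l * t₀) * (ε / (b - t₀) ^ 2) := by positivity
  have : 0 < (l - C) * ψ t₀ := mul_pos (sub_pos.mpr hl) (hψ₀ ▸ hpos)
  linarith

theorem nonpos_of_isViscositySubsolutionAt {Ω : Set E} (hΩopen : IsOpen Ω)
    (hK : IsCompact (closure Ω)) {a b : ℝ} (hf : ContinuousOn f (closure Ω ×ˢ Icc a b))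
    (h_init : ∀ x ∈ closure Ω, f (x, a) ≤ 0)
    (h_bdry : ∀ x ∈ frontier Ω, ∀ t ∈ Ioo a b, f (x, t) ≤ 0)
    (h_visc : ∀ x₀ ∈ Ω, ∀ t₀ ∈ Ioo a b, 0 < f (x₀, t₀) →
      IsViscositySubsolutionAt C f (Ω ×ˢ Ioo a b) (x₀, t₀)) :
    ∀ p ∈ closure Ω ×ˢ Ico a b, f p ≤ 0 := by
  by_contra! ⟨p₁, hp₁, hfp₁⟩
  set g := fun p : E × ℝ => f p / exp ((C + 1) * p.2)
  have hg : ContinuousOn g (closure Ω ×ˢ Icc a b) :=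
    hf.div (by fun_prop) fun p _ => (exp_pos _).ne'
  have hbp₁ : 0 < b - p₁.2 := sub_pos.mpr hp₁.2.2
  have hgp₁ : 0 < g p₁ := div_pos hfp₁ (exp_pos _)
  set ε := (b - p₁.2) * g p₁ / 2
  have hε : 0 < ε := by positivity
  obtain ⟨⟨x₀, t₀⟩, ⟨hx₀, ht₀⟩, hmax⟩ := exists_isMaxOn_sub_div_sub hK hε hg hp₁
  have hfp₀ : 0 < f (x₀, t₀) := by
    have hp₁max : g p₁ - ε / (b - p₁.2) ≤ g (x₀, t₀) - ε / (b - t₀) := hmax hp₁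
    have hpen₁ : ε / (b - p₁.2) = g p₁ / 2 := by
      simp only [ε]
      field_simp
    have hpen₀ : 0 < ε / (b - t₀) := div_pos hε (sub_pos.mpr ht₀.2)
    have : 0 < g (x₀, t₀) := by linarith
    exact (div_pos_iff_of_pos_right (exp_pos _)).mp this
  have ht₀a : a < t₀ := ht₀.1.lt_of_ne fun h => (h_init x₀ hx₀).not_gt (h ▸ hfp₀)
  have hx₀Ω : x₀ ∈ Ω := by
    by_contra hx₀Ω
    have hfr : x₀ ∈ frontier Ω := by
      rw [frontier, hΩopen.interior_eq]
      exact ⟨hx₀, hx₀Ω⟩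
    exact (h_bdry x₀ hfr t₀ ⟨ht₀a, ht₀.2⟩).not_gt hfp₀
  have hV : Ω ×ˢ Ioo a b ∈ 𝓝 (x₀, t₀) :=
    (hΩopen.prod isOpen_Ioo).mem_nhds ⟨hx₀Ω, ht₀a, ht₀.2⟩
  exact (h_visc x₀ hx₀Ω t₀ ⟨ht₀a, ht₀.2⟩ hfp₀).false_of_isMaxOn hV (lt_add_one C) hε.le
    (fun p hp => hp.2.2) (hmax.on_subset (prod_mono subset_closure Ioo_subset_Ico_self)) hfp₀

end Viscosity

theorem viscosity_maximum_principle_general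
    {m : ℕ} (Ω : Set (EuclideanSpace ℝ (Fin m))) (hΩopen : IsOpen Ω)
    (hΩbdd : Bornology.IsBounded Ω)
    (a b : ℝ) (hab : a < b)
    (f : EuclideanSpace ℝ (Fin m) × ℝ → ℝ)
    (hf_cont : ContinuousOn f (closure Ω ×ˢ Icc a b))
    (h_init : ∀ x ∈ closure Ω, f (x, a) ≤ 0)
    (h_bdry : ∀ x ∈ frontier Ω, ∀ t ∈ Icc a b, f (x, t) ≤ 0)
    (C : ℝ)
    (h_visc : ∀ x₀ ∈ Ω, ∀ t₀ ∈ Ioo a b, 0 < f (x₀, t₀) →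
      ∀ (φ : EuclideanSpace ℝ (Fin m) × ℝ → ℝ) (U : Set (EuclideanSpace ℝ (Fin m) × ℝ)),
        U ∈ nhds (x₀, t₀) → U ⊆ Ω ×ˢ Ioo a b → ContDiffOn ℝ 2 φ U →
        φ (x₀, t₀) = f (x₀, t₀) → (∀ p ∈ U, f p ≤ φ p) →
        deriv (fun s => φ (x₀, s)) t₀ - laplacian (fun y => φ (y, t₀)) x₀
          - C * φ (x₀, t₀) ≤ 0) :
    ∀ x ∈ closure Ω, ∀ t ∈ Icc a b, f (x, t) ≤ 0 := by
  have h_Ico : ∀ p ∈ closure Ω ×ˢ Ico a b, f p ≤ 0 :=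
    nonpos_of_isViscositySubsolutionAt hΩopen hΩbdd.isCompact_closure hf_cont h_init
      (fun x hx t ht => h_bdry x hx t (Ioo_subset_Icc_self ht)) h_visc
  have h_closure : closure (closure Ω ×ˢ Ico a b) = closure Ω ×ˢ Icc a b := by
    rw [closure_prod_eq, closure_closure, closure_Ico hab.ne]
  intro x hx t ht
  exact le_on_closure h_Ico (h_closure ▸ hf_cont) continuousOn_const (h_closure ▸ ⟨hx, ht⟩)

/-- Maximum principle for viscosity solutions: a continuous function that is nonpositive on
the parabolic boundary and satisfies `∂f/∂t − Δf − C·f ≤ 0` in the viscosity sense wherever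
it is positive must be nonpositive everywhere. -/
theorem viscosity_maximum_principle
    {m : ℕ} (Ω : Set (EuclideanSpace ℝ (Fin m))) (hΩne : Ω.Nonempty) (hΩopen : IsOpen Ω)
    (hΩbdd : Bornology.IsBounded Ω)
    (a b : ℝ) (hab : a < b)
    (f : EuclideanSpace ℝ (Fin m) × ℝ → ℝ)
    (hf_cont : ContinuousOn f (closure Ω ×ˢ Icc a b))
    (h_init : ∀ x ∈ closure Ω, f (x, a) ≤ 0)
    (h_bdry : ∀ x ∈ frontier Ω, ∀ t ∈ Icc a b, f (x, t) ≤ 0)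
    (C : ℝ)
    (h_visc : ∀ x₀ ∈ Ω, ∀ t₀ ∈ Ioo a b, 0 < f (x₀, t₀) →
      ∀ (φ : EuclideanSpace ℝ (Fin m) × ℝ → ℝ) (U : Set (EuclideanSpace ℝ (Fin m) × ℝ)),
        U ∈ nhds (x₀, t₀) → U ⊆ Ω ×ˢ Ioo a b → ContDiffOn ℝ 2 φ U →
        φ (x₀, t₀) = f (x₀, t₀) → (∀ p ∈ U, f p ≤ φ p) →
        deriv (fun s => φ (x₀, s)) t₀ - laplacian (fun y => φ (y, t₀)) x₀
          - C * φ (x₀, t₀) ≤ 0) :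
    ∀ x ∈ closure Ω, ∀ t ∈ Icc a b, f (x, t) ≤ 0 :=
  viscosity_maximum_principle_general Ω hΩopen hΩbdd a b hab f hf_cont h_init h_bdry C h_visc
end

section
/- Let Ω ⊆ ℝ^m be an open set, let a < b be real numbers, and let Y ⊆ ℝ^n be a nonempty closed convex set. Suppose u : Ω × (a,b) → ℝ^n is smooth and satisfies ∂u/∂t = Δu (the Laplacian taken componentwise in the spatial variable). Define σ(x,t) = dist(u(x,t), Y). Then at every point (x₀,t₀) ∈ Ω × (a,b) where σ(x₀,t₀) > 0, σ satisfies ∂σ/∂t − Δσ ≤ 0 in the viscosity sense. -/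
open Metric Set

open Filter
open scoped InnerProductSpace

/-- If `g` has derivative `g'` near `0`, `g'` has derivative `c` at `0`, and `g` has a local
minimum at `0`, then `c ≥ 0`. -/
lemma aux_second_deriv_nonneg {g g' : ℝ → ℝ} {c : ℝ}
    (hg' : ∀ᶠ s in nhds 0, HasDerivAt g (g' s) s)
    (hg'' : HasDerivAt g' c 0) (hmin : IsLocalMin g 0) : 0 ≤ c := by
  by_contra hc
  push_neg at hc
  have h0 : g' 0 = 0 := by
    rw [← hg'.self_of_nhds.deriv]
    exact hmin.deriv_eq_zero
  have h3 : Tendsto (slope g' 0) (nhdsWithin (0:ℝ) {0}ᶜ) (nhds c) :=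
    hasDerivAt_iff_tendsto_slope.mp hg''
  have h4 : ∀ᶠ s in nhdsWithin (0:ℝ) {0}ᶜ, slope g' 0 s < 0 :=
    h3.eventually (gt_mem_nhds hc)
  have hev : ∀ᶠ s in nhdsWithin (0:ℝ) (Ioi 0), g' s < 0 := by
    have h4' : ∀ᶠ s in nhdsWithin (0:ℝ) (Ioi 0), slope g' 0 s < 0 :=
      h4.filter_mono (nhdsWithin_mono 0 (show Ioi (0:ℝ) ⊆ {0}ᶜ from fun s hs => ne_of_gt hs))
    filter_upwards [h4', self_mem_nhdsWithin] with s hs hspos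
    have hdiv : g' s / s < 0 := by
      simpa [slope_def_field, h0] using hs
    have := mul_neg_of_neg_of_pos hdiv hspos
    rwa [div_mul_cancel₀ _ (ne_of_gt hspos)] at this
  obtain ⟨δ₁, hδ₁, hI⟩ := mem_nhdsGT_iff_exists_Ioo_subset.mp hev
  obtain ⟨ε, hε, hball⟩ := Metric.eventually_nhds_iff.mp (hg'.and hmin)
  set δ := min δ₁ ε with hδdef
  have hδpos : 0 < δ := lt_min hδ₁ hε
  have hδle₁ : δ ≤ δ₁ := min_le_left _ _
  have hδle₂ : δ ≤ ε := min_le_right _ _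
  have hmem : ∀ s ∈ Icc (0:ℝ) (δ/2), dist s 0 < ε := by
    intro s hs
    rw [Real.dist_eq, sub_zero, abs_of_nonneg hs.1]
    calc s ≤ δ/2 := hs.2
    _ < δ := by linarith
    _ ≤ ε := hδle₂
  have hcont : ContinuousOn g (Icc 0 (δ/2)) := fun s hs =>
    ((hball (hmem s hs)).1.continuousAt).continuousWithinAt
  have hderiv : ∀ s ∈ interior (Icc (0:ℝ) (δ/2)), deriv g s < 0 := by
    intro s hs
    rw [interior_Icc] at hs
    have hsI : s ∈ Ioo 0 δ₁ := ⟨hs.1, by have := hs.2; linarith⟩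
    have hd : HasDerivAt g (g' s) s := (hball (hmem s ⟨hs.1.le, hs.2.le⟩)).1
    rw [hd.deriv]
    exact hI hsI
  have hanti : StrictAntiOn g (Icc 0 (δ/2)) :=
    strictAntiOn_of_deriv_neg (convex_Icc _ _) hcont hderiv
  have h5 : g (δ/2) < g 0 :=
    hanti (by constructor <;> [rfl; positivity]) ⟨by positivity, le_refl _⟩ (by positivity)
  have h6 : g 0 ≤ g (δ/2) := (hball (hmem _ ⟨by positivity, le_refl _⟩)).2
  linarith

/-- Second directional derivative is nonnegative at a local minimum of a `C²` function. -/
lemma aux_iteratedFDeriv_nonneg {E : Type*} [NormedAddCommGroup E] [NormedSpace ℝ E]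
    {f : E → ℝ} {x : E} (hf : ContDiffAt ℝ 2 f x) (hmin : IsLocalMin f x) (v : E) :
    0 ≤ iteratedFDeriv ℝ 2 f x ![v, v] := by
  obtain ⟨s, hs, hfs⟩ := hf.contDiffOn le_rfl (by simp)
  have hxs : x ∈ interior s := mem_interior_iff_mem_nhds.2 hs
  have hfi : ContDiffOn ℝ 2 f (interior s) := hfs.mono interior_subset
  set ℓ : ℝ → E := fun t => x + t • v with hℓ
  have hline : ∀ t : ℝ, HasDerivAt ℓ v t := by
    intro t
    have := ((hasDerivAt_id t).smul_const v).const_add x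
    simp only [one_smul] at this
    exact this
  have hℓ0 : ℓ 0 = x := by simp [hℓ]
  have hℓcont : Continuous ℓ := continuous_const.add (continuous_id.smul continuous_const)
  have hmin' : IsLocalMin (f ∘ ℓ) 0 := by
    apply IsLocalMin.comp_continuous _ hℓcont.continuousAt
    rw [hℓ0]; exact hmin
  have hg' : ∀ᶠ t in nhds (0:ℝ), HasDerivAt (f ∘ ℓ) (fderiv ℝ f (ℓ t) v) t := by
    have hnear : ∀ᶠ t in nhds (0:ℝ), ℓ t ∈ interior s := by
      have : ContinuousAt ℓ 0 := hℓcont.continuousAt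
      have := this.preimage_mem_nhds (isOpen_interior.mem_nhds (hℓ0 ▸ hxs))
      filter_upwards [this] with t ht using ht
    filter_upwards [hnear] with t ht
    have hdf : DifferentiableAt ℝ f (ℓ t) :=
      (hfi.contDiffAt (isOpen_interior.mem_nhds ht)).differentiableAt (by norm_num)
    exact hdf.hasFDerivAt.comp_hasDerivAt t (hline t)
  have hF1 : DifferentiableAt ℝ (fderiv ℝ f) x :=
    (hf.fderiv_right (m := 1) (by norm_num)).differentiableAt (by norm_num)
  have hcomp : HasDerivAt (fun t => fderiv ℝ f (ℓ t)) (fderiv ℝ (fderiv ℝ f) x v) 0 := by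
    have h1 : HasFDerivAt (fderiv ℝ f) (fderiv ℝ (fderiv ℝ f) x) (ℓ 0) := by
      rw [hℓ0]; exact hF1.hasFDerivAt
    exact h1.comp_hasDerivAt 0 (hline 0)
  have hg'' : HasDerivAt (fun t => fderiv ℝ f (ℓ t) v) (fderiv ℝ (fderiv ℝ f) x v v) 0 := by
    have := hcomp.clm_apply (hasDerivAt_const (0:ℝ) v)
    simpa using this
  have hc := aux_second_deriv_nonneg hg' hg'' hmin'
  rwa [iteratedFDeriv_two_apply, show (![v, v] : Fin 2 → E) 0 = v from rfl,
    show (![v, v] : Fin 2 → E) 1 = v from rfl]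

/-- `iteratedFDeriv` of order 2 of a difference of two `C²`-at-a-point functions. -/
lemma aux_iteratedFDeriv_sub {E F : Type*} [NormedAddCommGroup E] [NormedSpace ℝ E]
    [NormedAddCommGroup F] [NormedSpace ℝ F] {f g : E → F} {x : E}
    (hf : ContDiffAt ℝ 2 f x) (hg : ContDiffAt ℝ 2 g x) (v : Fin 2 → E) :
    iteratedFDeriv ℝ 2 (fun y => f y - g y) x v
      = iteratedFDeriv ℝ 2 f x v - iteratedFDeriv ℝ 2 g x v := by
  obtain ⟨s, hs, hfs⟩ := hf.contDiffOn le_rfl (by simp)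
  obtain ⟨t, ht, hgt⟩ := hg.contDiffOn le_rfl (by simp)
  set W := interior s ∩ interior t with hW
  have hWo : IsOpen W := isOpen_interior.inter isOpen_interior
  have hxW : x ∈ W := ⟨mem_interior_iff_mem_nhds.2 hs, mem_interior_iff_mem_nhds.2 ht⟩
  have hfW : ContDiffOn ℝ 2 f W := hfs.mono (inter_subset_left.trans interior_subset)
  have hgW : ContDiffOn ℝ 2 g W := hgt.mono (inter_subset_right.trans interior_subset)
  have e1 : iteratedFDeriv ℝ 2 (fun y => f y - g y) x
      = iteratedFDerivWithin ℝ 2 (fun y => f y - g y) W x :=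
    (iteratedFDerivWithin_of_isOpen 2 hWo hxW).symm
  have e2 : iteratedFDeriv ℝ 2 f x = iteratedFDerivWithin ℝ 2 f W x :=
    (iteratedFDerivWithin_of_isOpen 2 hWo hxW).symm
  have e3 : iteratedFDeriv ℝ 2 g x = iteratedFDerivWithin ℝ 2 g W x :=
    (iteratedFDerivWithin_of_isOpen 2 hWo hxW).symm
  rw [e1, e2, e3]
  have heq : (fun y => f y - g y) = f + (-g) := by
    ext y; simp [sub_eq_add_neg]
  rw [heq, iteratedFDerivWithin_add_apply (hfW.contDiffWithinAt hxW) (show ContDiffWithinAt ℝ 2 (-g) W x from hgW.neg.contDiffWithinAt hxW)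
    hWo.uniqueDiffOn hxW, iteratedFDerivWithin_neg_apply hWo.uniqueDiffOn hxW]
  simp [sub_eq_add_neg]

/-- `iteratedFDeriv` of order 2 commutes with postcomposition by a continuous linear map,
for a function which is `C²` at a point. -/
lemma aux_iteratedFDeriv_clm {E F G : Type*} [NormedAddCommGroup E] [NormedSpace ℝ E]
    [NormedAddCommGroup F] [NormedSpace ℝ F] [NormedAddCommGroup G] [NormedSpace ℝ G]
    (L : F →L[ℝ] G) {f : E → F} {x : E} (hf : ContDiffAt ℝ 2 f x) (v : Fin 2 → E) :
    iteratedFDeriv ℝ 2 (fun y => L (f y)) x v = L (iteratedFDeriv ℝ 2 f x v) := by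
  obtain ⟨s, hs, hfs⟩ := hf.contDiffOn le_rfl (by simp)
  have hxW : x ∈ interior s := mem_interior_iff_mem_nhds.2 hs
  have hfW : ContDiffOn ℝ 2 f (interior s) := hfs.mono interior_subset
  have e1 : iteratedFDeriv ℝ 2 (fun y => L (f y)) x
      = iteratedFDerivWithin ℝ 2 (fun y => L (f y)) (interior s) x :=
    (iteratedFDerivWithin_of_isOpen 2 isOpen_interior hxW).symm
  have e2 : iteratedFDeriv ℝ 2 f x = iteratedFDerivWithin ℝ 2 f (interior s) x :=
    (iteratedFDerivWithin_of_isOpen 2 isOpen_interior hxW).symm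
  rw [e1, e2]
  have h := L.iteratedFDerivWithin_comp_left (hfW.contDiffWithinAt hxW) isOpen_interior.uniqueDiffOn hxW
    (i := 2) (by norm_num)
  have : (fun y => L (f y)) = (L ∘ f) := rfl
  rw [this, h]
  rfl

/-- For a smooth solution of the heat equation, the distance of its values to a nonempty
closed convex set satisfies `∂σ/∂t − Δσ ≤ 0` in the viscosity sense wherever it is positive. -/
theorem dist_comp_heat_flow_is_viscosity_subsolution
    {m n : ℕ} (Ω : Set (EuclideanSpace ℝ (Fin m))) (hΩopen : IsOpen Ω)
    (a b : ℝ) (hab : a < b)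
    (Y : Set (EuclideanSpace ℝ (Fin n))) (hYne : Y.Nonempty) (hYclosed : IsClosed Y)
    (hYconv : Convex ℝ Y)
    (u : EuclideanSpace ℝ (Fin m) × ℝ → EuclideanSpace ℝ (Fin n))
    (hu_smooth : ContDiffOn ℝ (⊤ : ℕ∞) u (Ω ×ˢ Ioo a b))
    (hu_heat : ∀ x ∈ Ω, ∀ t ∈ Ioo a b,
      deriv (fun s => u (x, s)) t = laplacian (fun y => u (y, t)) x)
    (σ : EuclideanSpace ℝ (Fin m) × ℝ → ℝ)
    (hσ : ∀ p, σ p = infDist (u p) Y) :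
    ∀ x₀ ∈ Ω, ∀ t₀ ∈ Ioo a b, 0 < σ (x₀, t₀) →
      ∀ (φ : EuclideanSpace ℝ (Fin m) × ℝ → ℝ) (U : Set (EuclideanSpace ℝ (Fin m) × ℝ)),
        U ∈ nhds (x₀, t₀) → U ⊆ Ω ×ˢ Ioo a b → ContDiffOn ℝ 2 φ U →
        φ (x₀, t₀) = σ (x₀, t₀) → (∀ p ∈ U, σ p ≤ φ p) →
        deriv (fun s => φ (x₀, s)) t₀ - laplacian (fun y => φ (y, t₀)) x₀ ≤ 0 := by
  intro x₀ hx₀ t₀ ht₀ hpos φ U hU hUsub hφ hφeq hφge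
  have hopen : IsOpen (Ω ×ˢ Ioo a b) := hΩopen.prod isOpen_Ioo
  have hp₀ : (x₀, t₀) ∈ Ω ×ˢ Ioo a b := ⟨hx₀, ht₀⟩
  -- the nearest point of `Y` to `u (x₀, t₀)`
  obtain ⟨q₀, hq₀Y, hq₀⟩ := hYclosed.exists_infDist_eq_dist hYne (u (x₀, t₀))
  set w₀ := u (x₀, t₀) - q₀ with hw₀def
  have hσ₀ : σ (x₀, t₀) = ‖w₀‖ := by rw [hσ, hq₀, dist_eq_norm]
  have hw₀pos : 0 < ‖w₀‖ := hσ₀ ▸ hpos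
  set ν := ‖w₀‖⁻¹ • w₀ with hνdef
  have hνnorm : ‖ν‖ = 1 := by
    rw [hνdef, norm_smul, norm_inv, norm_norm, inv_mul_cancel₀ hw₀pos.ne']
  -- the supporting halfspace inequality
  have hproj : ∀ y ∈ Y, ⟪w₀, y - q₀⟫_ℝ ≤ 0 := by
    have hiInf : ‖u (x₀, t₀) - q₀‖ = ⨅ w : Y, ‖u (x₀, t₀) - w‖ := by
      rw [← dist_eq_norm, ← hq₀, infDist_eq_iInf]
      simp_rw [dist_eq_norm]
    exact fun y hy => (norm_eq_iInf_iff_real_inner_le_zero hYconv hq₀Y).1 hiInf y hy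
  set L : EuclideanSpace ℝ (Fin n) →L[ℝ] ℝ := innerSL ℝ ν with hLdef
  have hLapp : ∀ w, L w = ⟪ν, w⟫_ℝ := fun w => rfl
  -- the affine lower bound for σ
  have hψle : ∀ p, L (u p) - L q₀ ≤ σ p := by
    intro p
    rw [hσ, infDist_eq_iInf]
    have : Nonempty Y := hYne.to_subtype
    apply le_ciInf
    rintro ⟨y, hy⟩
    have h1 : L (u p) - L q₀ = ⟪ν, u p - y⟫_ℝ + ⟪ν, y - q₀⟫_ℝ := by
      rw [hLapp, hLapp, inner_sub_right, inner_sub_right]; ring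
    have h2 : ⟪ν, y - q₀⟫_ℝ ≤ 0 := by
      rw [hνdef, real_inner_smul_left]
      exact mul_nonpos_of_nonneg_of_nonpos (inv_nonneg.2 (norm_nonneg _)) (hproj y hy)
    have h3 : ⟪ν, u p - y⟫_ℝ ≤ dist (u p) y := by
      calc ⟪ν, u p - y⟫_ℝ ≤ ‖ν‖ * ‖u p - y‖ := real_inner_le_norm _ _
      _ = dist (u p) y := by rw [hνnorm, one_mul, dist_eq_norm]
    rw [h1]
    calc ⟪ν, u p - y⟫_ℝ + ⟪ν, y - q₀⟫_ℝ ≤ dist (u p) y + 0 := add_le_add h3 h2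
    _ = dist (u p) y := add_zero _
  -- equality at the touching point
  have heq0 : L (u (x₀, t₀)) - L q₀ = σ (x₀, t₀) := by
    have h1 : L (u (x₀, t₀)) - L q₀ = ⟪ν, w₀⟫_ℝ := by
      rw [hLapp, hLapp, hw₀def, inner_sub_right]
    rw [h1, hνdef, real_inner_smul_left, real_inner_self_eq_norm_sq, hσ₀]
    field_simp
  -- φ - L ∘ u has a local minimum at (x₀, t₀)
  have hlm : IsLocalMin (fun p => φ p - L (u p)) (x₀, t₀) := by
    apply Filter.eventually_of_mem hU
    intro p hp
    show φ (x₀, t₀) - L (u (x₀, t₀)) ≤ φ p - L (u p)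
    have h1 := hψle p
    have h2 := hφge p hp
    have h3 : φ (x₀, t₀) - L (u (x₀, t₀)) = -L q₀ := by rw [hφeq, ← heq0]; ring
    rw [h3]
    linarith
  -- smoothness at the point
  have huC : ContDiffAt ℝ 2 u (x₀, t₀) :=
    (hu_smooth.contDiffAt (hopen.mem_nhds hp₀)).of_le (by exact WithTop.coe_le_coe.mpr (le_top : (2:ℕ∞) ≤ ⊤))
  have hφC : ContDiffAt ℝ 2 φ (x₀, t₀) := hφ.contDiffAt hU
  have hinc_t : ContDiffAt ℝ 2 (fun s : ℝ => ((x₀, s) : EuclideanSpace ℝ (Fin m) × ℝ)) t₀ :=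
    (contDiff_const.prodMk contDiff_id).contDiffAt
  have hinc_x : ContDiffAt ℝ 2
      (fun y : EuclideanSpace ℝ (Fin m) => ((y, t₀) : EuclideanSpace ℝ (Fin m) × ℝ)) x₀ :=
    (contDiff_id.prodMk contDiff_const).contDiffAt
  have hφt : ContDiffAt ℝ 2 (fun s => φ (x₀, s)) t₀ := hφC.comp t₀ hinc_t
  have hut : ContDiffAt ℝ 2 (fun s => u (x₀, s)) t₀ := huC.comp t₀ hinc_t
  have hφx : ContDiffAt ℝ 2 (fun y => φ (y, t₀)) x₀ := hφC.comp x₀ hinc_x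
  have hux : ContDiffAt ℝ 2 (fun y => u (y, t₀)) x₀ := huC.comp x₀ hinc_x
  -- time derivative equality
  have hlmt : IsLocalMin (fun s => φ (x₀, s) - L (u (x₀, s))) t₀ := by
    have := hlm.comp_continuous (g := fun s : ℝ => ((x₀, s) : EuclideanSpace ℝ (Fin m) × ℝ))
      (continuous_const.prodMk continuous_id).continuousAt
    exact this
  have hφdiff : DifferentiableAt ℝ (fun s => φ (x₀, s)) t₀ := hφt.differentiableAt (by norm_num)
  have hudiff : DifferentiableAt ℝ (fun s => u (x₀, s)) t₀ := hut.differentiableAt (by norm_num)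
  have hLu : HasDerivAt (fun s => L (u (x₀, s))) (L (deriv (fun s => u (x₀, s)) t₀)) t₀ :=
    L.hasFDerivAt.comp_hasDerivAt t₀ hudiff.hasDerivAt
  have hsplit : deriv (fun s => φ (x₀, s)) t₀ = L (deriv (fun s => u (x₀, s)) t₀) := by
    have hd : deriv (fun s => φ (x₀, s) - L (u (x₀, s))) t₀
        = deriv (fun s => φ (x₀, s)) t₀ - L (deriv (fun s => u (x₀, s)) t₀) := by
      rw [deriv_fun_sub hφdiff hLu.differentiableAt, hLu.deriv]
    have h0 := hlmt.deriv_eq_zero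
    rw [hd] at h0
    linarith
  -- spatial Laplacian inequality
  have hlmx : IsLocalMin (fun y => φ (y, t₀) - L (u (y, t₀))) x₀ := by
    have := hlm.comp_continuous
      (g := fun y : EuclideanSpace ℝ (Fin m) => ((y, t₀) : EuclideanSpace ℝ (Fin m) × ℝ))
      (continuous_id.prodMk continuous_const).continuousAt
    exact this
  have hLux : ContDiffAt ℝ 2 (fun y => L (u (y, t₀))) x₀ :=
    (L.contDiff.contDiffAt).comp x₀ hux
  have hCx : ContDiffAt ℝ 2 (fun y => φ (y, t₀) - L (u (y, t₀))) x₀ := hφx.sub hLux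
  have hkey : ∀ v : EuclideanSpace ℝ (Fin m),
      L (iteratedFDeriv ℝ 2 (fun y => u (y, t₀)) x₀ ![v, v])
        ≤ iteratedFDeriv ℝ 2 (fun y => φ (y, t₀)) x₀ ![v, v] := by
    intro v
    have h0 := aux_iteratedFDeriv_nonneg hCx hlmx v
    rw [aux_iteratedFDeriv_sub hφx hLux, aux_iteratedFDeriv_clm L hux] at h0
    linarith
  have hlap : L (laplacian (fun y => u (y, t₀)) x₀) ≤ laplacian (fun y => φ (y, t₀)) x₀ := by
    rw [laplacian, laplacian, map_sum]
    exact Finset.sum_le_sum fun i _ => hkey _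
  -- conclusion via the heat equation
  rw [hsplit]
  have hheat := hu_heat x₀ hx₀ t₀ ht₀
  rw [hheat]
  linarith
end

section
/- Let Ω ⊆ ℝ^m be a nonempty bounded open set, let a < b be real numbers, and let f : closure(Ω) × [a,b] → ℝ be continuous, smooth on Ω × (a,b), and satisfy f ≤ 0 on closure(Ω) × {a} and f ≤ 0 on frontier(Ω) × [a,b]. Suppose there exists C ∈ ℝ such that at every point (x,t) ∈ Ω × (a,b) where f(x,t) > 0, one has ∂f/∂t(x,t) − Δf(x,t) − C·f(x,t) ≤ 0. Then f ≤ 0 on all of closure(Ω) × [a,b]. -/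
open Set Filter Topology

lemma deriv_nonneg_left {φ : ℝ → ℝ} {t d : ℝ} (hd : HasDerivAt φ d t)
    (h : ∀ᶠ s in 𝓝[<] t, φ s ≤ φ t) : 0 ≤ d := by
  have hs := hasDerivAt_iff_tendsto_slope.1 hd
  have hs' : Tendsto (slope φ t) (𝓝[<] t) (𝓝 d) :=
    hs.mono_left (nhdsWithin_mono t (fun s hs => ne_of_lt hs))
  refine ge_of_tendsto hs' ?_
  filter_upwards [h, self_mem_nhdsWithin] with s h1 (h2 : s < t)
  rw [slope_def_field]
  exact div_nonneg_iff.mpr (Or.inr ⟨by linarith, by linarith⟩)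

lemma second_deriv_nonpos_of_isLocalMax {E : Type*} [NormedAddCommGroup E] [NormedSpace ℝ E]
    {f : E → ℝ} {U : Set E} (hU : IsOpen U) {x : E} (hx : x ∈ U)
    (hf : ContDiffOn ℝ (⊤ : ℕ∞) f U) (hmax : IsLocalMax f x) (v : E) :
    fderiv ℝ (fderiv ℝ f) x v v ≤ 0 := by
  by_contra hD
  push_neg at hD
  set F1 := fderiv ℝ f with hF1
  have hF1diff : DifferentiableOn ℝ F1 U :=
    (hf.fderiv_of_isOpen hU (WithTop.coe_le_coe.mpr (le_top : (1 + 1 : ℕ∞) ≤ ⊤))).differentiableOn one_ne_zero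
  have hFx' : HasFDerivAt F1 (fderiv ℝ F1 x) (x + (0:ℝ) • v) := by
    simpa using (hF1diff.differentiableAt (hU.mem_nhds hx)).hasFDerivAt
  have hline : ∀ s : ℝ, HasDerivAt (fun s : ℝ => x + s • v) v s := by
    intro s
    simpa using ((hasDerivAt_id s).smul_const v).const_add x
  set ψ : ℝ → ℝ := fun s => F1 (x + s • v) v with hψdef
  have hψ : HasDerivAt ψ (fderiv ℝ F1 x v v) 0 := by
    have h1 : HasDerivAt (fun s : ℝ => F1 (x + s • v)) (fderiv ℝ F1 x v) 0 :=
      hFx'.comp_hasDerivAt 0 (hline 0)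
    simpa using h1.clm_apply (hasDerivAt_const 0 v)
  have hψ0 : ψ 0 = 0 := by
    simp [hψdef, hF1, hmax.fderiv_eq_zero]
  -- ψ is positive on a small right interval
  have hev : ∀ᶠ s in 𝓝[>] (0:ℝ), 0 < ψ s := by
    have hslope : Tendsto (slope ψ 0) (𝓝[>] (0:ℝ)) (𝓝 (fderiv ℝ F1 x v v)) :=
      (hasDerivAt_iff_tendsto_slope.1 hψ).mono_left
        (nhdsWithin_mono _ (fun s hs => ne_of_gt hs))
    filter_upwards [hslope.eventually (eventually_gt_nhds hD), self_mem_nhdsWithin]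
      with s h1 (h2 : (0:ℝ) < s)
    rw [slope_def_field, hψ0, sub_zero, sub_zero] at h1
    have := mul_pos h1 h2
    rwa [div_mul_cancel₀ _ (ne_of_gt h2)] at this
  obtain ⟨δ3, hδ3mem, hδ3⟩ := mem_nhdsGT_iff_exists_Ioo_subset.mp hev
  have hδ3pos : (0:ℝ) < δ3 := hδ3mem
  -- neighborhood where the line stays in U
  have hc : Continuous (fun s : ℝ => x + s • v) := by continuity
  have hU0 : ∀ᶠ s in 𝓝 (0:ℝ), x + s • v ∈ U := by
    have : Tendsto (fun s : ℝ => x + s • v) (𝓝 0) (𝓝 x) := by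
      simpa using hc.tendsto 0
    exact this.eventually (hU.mem_nhds hx)
  have hmax0 : ∀ᶠ s in 𝓝 (0:ℝ), f (x + s • v) ≤ f x := by
    have : Tendsto (fun s : ℝ => x + s • v) (𝓝 0) (𝓝 x) := by
      simpa using hc.tendsto 0
    exact this.eventually hmax
  obtain ⟨δ1, hδ1pos, hδ1⟩ := Metric.eventually_nhds_iff.mp (hU0.and hmax0)
  set δ := min (δ1 / 2) (δ3 / 2) with hδdef
  have hδpos : 0 < δ := lt_min (by linarith) (by linarith)
  have hδlt1 : δ < δ1 := lt_of_le_of_lt (min_le_left _ _) (by linarith)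
  have hδle3 : δ ≤ δ3 := le_trans (min_le_right _ _) (by linarith)
  have hmem : ∀ s ∈ Icc (0:ℝ) δ, x + s • v ∈ U ∧ f (x + s • v) ≤ f x := by
    intro s hs
    apply hδ1
    rw [Real.dist_eq, sub_zero, abs_of_nonneg hs.1]
    exact lt_of_le_of_lt hs.2 hδlt1
  set φ : ℝ → ℝ := fun s => f (x + s • v) with hφdef
  have hφderiv : ∀ s ∈ Icc (0:ℝ) δ, HasDerivAt φ (ψ s) s := by
    intro s hs
    have hdf : DifferentiableAt ℝ f (x + s • v) :=
      (hf.differentiableOn (by simp)).differentiableAt (hU.mem_nhds (hmem s hs).1)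
    exact hdf.hasFDerivAt.comp_hasDerivAt s (hline s)
  have hmono : StrictMonoOn φ (Icc 0 δ) := by
    apply strictMonoOn_of_deriv_pos (convex_Icc 0 δ)
    · exact fun s hs => ((hφderiv s hs).differentiableAt.continuousAt).continuousWithinAt
    · intro s hs
      rw [interior_Icc] at hs
      rw [(hφderiv s ⟨hs.1.le, hs.2.le⟩).deriv]
      exact hδ3 ⟨hs.1, lt_of_lt_of_le hs.2 hδle3⟩
  have h1 : φ 0 < φ δ := hmono (left_mem_Icc.2 hδpos.le) (right_mem_Icc.2 hδpos.le) hδpos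
  have h2 : φ δ ≤ f x := (hmem δ (right_mem_Icc.2 hδpos.le)).2
  have h3 : φ 0 = f x := by simp [hφdef]
  linarith

lemma laplacian_nonpos_of_isLocalMax' {E : Type*} [NormedAddCommGroup E] [InnerProductSpace ℝ E]
    [FiniteDimensional ℝ E] {f : E → ℝ} {U : Set E} (hU : IsOpen U) {x : E} (hx : x ∈ U)
    (hf : ContDiffOn ℝ (⊤ : ℕ∞) f U) (hmax : IsLocalMax f x) :
    laplacian f x ≤ 0 := by
  unfold laplacian
  apply Finset.sum_nonpos
  intro i _
  rw [iteratedFDeriv_two_apply]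
  simpa using second_deriv_nonpos_of_isLocalMax hU hx hf hmax (stdOrthonormalBasis ℝ E i)


/-- Classical maximum principle: a smooth function that is nonpositive on the parabolic
boundary and satisfies `∂f/∂t − Δf − C·f ≤ 0` wherever it is positive must be nonpositive
everywhere. -/
theorem classical_maximum_principle
    {m : ℕ} (Ω : Set (EuclideanSpace ℝ (Fin m))) (hΩne : Ω.Nonempty) (hΩopen : IsOpen Ω)
    (hΩbdd : Bornology.IsBounded Ω)
    (a b : ℝ) (hab : a < b)
    (f : EuclideanSpace ℝ (Fin m) × ℝ → ℝ)
    (hf_cont : ContinuousOn f (closure Ω ×ˢ Icc a b))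
    (hf_smooth : ContDiffOn ℝ (⊤ : ℕ∞) f (Ω ×ˢ Ioo a b))
    (h_init : ∀ x ∈ closure Ω, f (x, a) ≤ 0)
    (h_bdry : ∀ x ∈ frontier Ω, ∀ t ∈ Icc a b, f (x, t) ≤ 0)
    (C : ℝ)
    (h_ineq : ∀ x ∈ Ω, ∀ t ∈ Ioo a b, 0 < f (x, t) →
      deriv (fun s => f (x, s)) t - laplacian (fun y => f (y, t)) x - C * f (x, t) ≤ 0) :
    ∀ x ∈ closure Ω, ∀ t ∈ Icc a b, f (x, t) ≤ 0 := by
  have key : ∀ ε > 0, ∀ b', a ≤ b' → b' < b → ∀ p ∈ closure Ω ×ˢ Icc a b',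
      f p * Real.exp (-C * (p.2 - a)) - ε * (p.2 - a) ≤ 0 := by
    intro ε hε b' hab' hb'b
    set g : EuclideanSpace ℝ (Fin m) × ℝ → ℝ :=
      fun p => f p * Real.exp (-C * (p.2 - a)) - ε * (p.2 - a) with hgdef
    set K' : Set (EuclideanSpace ℝ (Fin m) × ℝ) := closure Ω ×ˢ Icc a b' with hK'def
    have hK'sub : K' ⊆ closure Ω ×ˢ Icc a b :=
      prod_mono_right (Icc_subset_Icc le_rfl hb'b.le)
    have hK'c : IsCompact K' :=
      (Metric.isCompact_of_isClosed_isBounded isClosed_closure hΩbdd.closure).prod isCompact_Icc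
    have hK'ne : K'.Nonempty :=
      (hΩne.mono subset_closure).prod (nonempty_Icc.mpr hab')
    have hgc : ContinuousOn g K' := by
      apply ContinuousOn.sub
      · exact (hf_cont.mono hK'sub).mul (Continuous.continuousOn (by fun_prop))
      · exact Continuous.continuousOn (by fun_prop)
    obtain ⟨⟨x₀, t₀⟩, hp₀, hmax⟩ := hK'c.exists_isMaxOn hK'ne hgc
    suffices h : g (x₀, t₀) ≤ 0 by
      intro p hp
      exact le_trans (isMaxOn_iff.mp hmax p hp) h
    by_contra hpos
    push_neg at hpos
    rw [hK'def, mem_prod] at hp₀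
    obtain ⟨hx₀, ht₀⟩ := hp₀
    have hexp : 0 < Real.exp (-C * (t₀ - a)) := Real.exp_pos _
    have hta : a ≤ t₀ := ht₀.1
    have hgval : 0 < f (x₀, t₀) * Real.exp (-C * (t₀ - a)) - ε * (t₀ - a) := hpos
    have hF : 0 < f (x₀, t₀) := by
      nlinarith [mul_nonneg hε.le (sub_nonneg.mpr hta)]
    have ht₀a : a < t₀ := by
      rcases lt_or_eq_of_le hta with h | h
      · exact h
      · exfalso
        have := h_init x₀ hx₀
        rw [← h] at hgval
        simp at hgval
        linarith
    have hx₀Ω : x₀ ∈ Ω := by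
      by_contra h
      have hfr : x₀ ∈ frontier Ω := by
        rw [frontier, hΩopen.interior_eq]
        exact ⟨hx₀, h⟩
      have := h_bdry x₀ hfr t₀ ⟨hta, ht₀.2.trans hb'b.le⟩
      linarith
    have ht₀b : t₀ < b := lt_of_le_of_lt ht₀.2 hb'b
    have ht₀mem : t₀ ∈ Ioo a b := ⟨ht₀a, ht₀b⟩
    -- spatial part
    have hsliceX : ContDiffOn ℝ (⊤ : ℕ∞) (fun y => f (y, t₀)) Ω := by
      apply hf_smooth.comp ((contDiff_id.prodMk contDiff_const).contDiffOn)
      exact fun y hy => mk_mem_prod hy ht₀mem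
    have hlocmax : IsLocalMax (fun y => f (y, t₀)) x₀ := by
      filter_upwards [hΩopen.mem_nhds hx₀Ω] with y hy
      have hyK : (y, t₀) ∈ K' := mk_mem_prod (subset_closure hy) ht₀
      have h1 : g (y, t₀) ≤ g (x₀, t₀) := isMaxOn_iff.mp hmax _ hyK
      rw [hgdef] at h1
      simp only at h1
      nlinarith
    have hlap : laplacian (fun y => f (y, t₀)) x₀ ≤ 0 :=
      laplacian_nonpos_of_isLocalMax' hΩopen hx₀Ω hsliceX hlocmax
    -- temporal part
    have hsliceT : ContDiffOn ℝ (⊤ : ℕ∞) (fun s => f (x₀, s)) (Ioo a b) := by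
      apply hf_smooth.comp ((contDiff_const.prodMk contDiff_id).contDiffOn)
      exact fun s hs => mk_mem_prod hx₀Ω hs
    have hdT : HasDerivAt (fun s => f (x₀, s)) (deriv (fun s => f (x₀, s)) t₀) t₀ :=
      ((hsliceT.differentiableOn (by simp)).differentiableAt
        (isOpen_Ioo.mem_nhds ht₀mem)).hasDerivAt
    set d := deriv (fun s => f (x₀, s)) t₀ with hddef
    have hφ : HasDerivAt (fun s => f (x₀, s) * Real.exp (-C * (s - a)) - ε * (s - a))
        (d * Real.exp (-C * (t₀ - a)) + f (x₀, t₀) * (-C * Real.exp (-C * (t₀ - a))) - ε) t₀ := by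
      have hi : HasDerivAt (fun s : ℝ => -C * (s - a)) (-C) t₀ := by
        simpa using ((hasDerivAt_id t₀).sub_const a).const_mul (-C)
      have he : HasDerivAt (fun s => Real.exp (-C * (s - a)))
          (-C * Real.exp (-C * (t₀ - a))) t₀ := by
        simpa [mul_comm] using hi.exp
      have hl : HasDerivAt (fun s : ℝ => ε * (s - a)) ε t₀ := by
        simpa using ((hasDerivAt_id t₀).sub_const a).const_mul ε
      exact (hdT.mul he).sub hl
    have hd0 : 0 ≤ d * Real.exp (-C * (t₀ - a)) + f (x₀, t₀) * (-C * Real.exp (-C * (t₀ - a))) - ε := by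
      apply deriv_nonneg_left hφ
      have hIoo : Ioo a t₀ ∈ 𝓝[<] t₀ := Ioo_mem_nhdsLT ht₀a
      filter_upwards [hIoo] with s hs
      have hsK : (x₀, s) ∈ K' := mk_mem_prod hx₀ ⟨hs.1.le, hs.2.le.trans ht₀.2⟩
      exact isMaxOn_iff.mp hmax _ hsK
    have hpde := h_ineq x₀ hx₀Ω t₀ ht₀mem hF
    rw [← hddef] at hpde
    have h1 : d - C * f (x₀, t₀) ≤ 0 := by linarith
    have h2 : (d - C * f (x₀, t₀)) * Real.exp (-C * (t₀ - a)) ≤ 0 := by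
      nlinarith
    nlinarith
  -- conclude for t ∈ [a, b)
  have hIco : ∀ x ∈ closure Ω, ∀ t ∈ Ico a b, f (x, t) ≤ 0 := by
    intro x hx t ht
    have h1 : ∀ ε > 0, f (x, t) * Real.exp (-C * (t - a)) ≤ ε * (t - a) := by
      intro ε hε
      have := key ε hε t ht.1 ht.2 (x, t) (mk_mem_prod hx ⟨ht.1, le_rfl⟩)
      linarith
    have hexp : 0 < Real.exp (-C * (t - a)) := Real.exp_pos _
    have h2 : f (x, t) * Real.exp (-C * (t - a)) ≤ 0 := by
      by_contra h
      push_neg at h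
      rcases lt_or_eq_of_le (sub_nonneg.2 ht.1) with h' | h'
      · have hεpos : 0 < f (x, t) * Real.exp (-C * (t - a)) / (2 * (t - a)) :=
          div_pos h (by linarith)
        have h3 := h1 _ hεpos
        have h4 : f (x, t) * Real.exp (-C * (t - a)) / (2 * (t - a)) * (t - a)
            = f (x, t) * Real.exp (-C * (t - a)) / 2 := by
          field_simp
        rw [h4] at h3
        linarith
      · have h3 := h1 1 one_pos
        rw [← h'] at h3
        simp at h3
        nlinarith
    nlinarith
  intro x hx t ht
  rcases lt_or_eq_of_le ht.2 with h | h
  · exact hIco x hx t ⟨ht.1, h⟩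
  · subst h
    have hcw : ContinuousOn (fun s => f (x, s)) (Icc a t) := by
      apply hf_cont.comp (Continuous.continuousOn (by fun_prop))
      exact fun s hs => mk_mem_prod hx hs
    have hne : (𝓝[Ico a t] t).NeBot := by
      apply mem_closure_iff_nhdsWithin_neBot.mp
      rw [closure_Ico (ne_of_lt hab)]
      exact ⟨hab.le, le_rfl⟩
    have htend : Tendsto (fun s => f (x, s)) (𝓝[Ico a t] t) (𝓝 (f (x, t))) :=
      (hcw t (right_mem_Icc.2 hab.le)).mono_left (nhdsWithin_mono _ Ico_subset_Icc_self)
    refine le_of_tendsto htend ?_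
    filter_upwards [self_mem_nhdsWithin] with s hs
    exact hIco x hx s hs
end
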